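/- Let k be a positive integer and let G be a finite connected simple graph with maximum degree Δ(G) ≥ k + 2 and order n(G). Then F_k(G) ≤ ((Δ(G) − k − 1)·n(G) + 2k) / (Δ(G) − 1). -/

import Mathlib

/-- One step of the `k`-forcing color change process: a colored vertex (in `S`)
with at most `k` non-colored neighbors causes all of its neighbors to become colored. -/
def kStep {V : Type*} [Fintype V] [DecidableEq V] (G : SimpleGraph V) [DecidableRel G.Adj]
    (k : ℕ) (S : Finset V) : Finset V :=
  S ∪ Finset.univ.filter (fun v => ∃ u ∈ S, G.Adj u v ∧ (G.neighborFinset u \ S).card ≤ k)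

/-- `S` is a `k`-forcing set if iterating the color change rule starting from `S`
eventually colors all vertices of `G`. -/
def IsKForcingSet {V : Type*} [Fintype V] [DecidableEq V] (G : SimpleGraph V)
    [DecidableRel G.Adj] (k : ℕ) (S : Finset V) : Prop :=
  ∃ n : ℕ, (kStep G k)^[n] S = Finset.univ

/-- The `k`-forcing number `F_k(G)`: the minimum cardinality of a `k`-forcing set. -/
noncomputable def kForcingNumber {V : Type*} [Fintype V] [DecidableEq V] (G : SimpleGraph V)
    [DecidableRel G.Adj] (k : ℕ) : ℕ :=
  sInf {m | ∃ S : Finset V, S.card = m ∧ IsKForcingSet G k S}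

/-!
Let `Δ` be the maximum degree. A vertex `v` of degree `Δ` together with `Δ - k` of its neighbours
forces the closed neighbourhood of `v`. From then on we keep the coloured set `C` free of vertices
with no coloured neighbour. When the forcing process stalls at a proper subset, connectivity gives
a coloured vertex `u` with an uncoloured neighbour; because the process stalls, `u` has `m > k`
uncoloured neighbours, and because `u` has a coloured neighbour, `m ≤ Δ - 1`. Colouring `m - k`
of them lets `u` force the others, and `(Δ - 1)(m - k) ≤ (Δ - k - 1) m` exactly when `m ≤ Δ - 1`.
So the `n - Δ - 1` vertices outside the first neighbourhood cost at most `(Δ - k - 1)/(Δ - 1)`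
each, and `F_k(G) ≤ (Δ - k + 1) + (Δ - k - 1)(n - Δ - 1)/(Δ - 1)`, which is the bound.
-/

section Forcing

variable {V : Type*} [Fintype V] [DecidableEq V] (G : SimpleGraph V) [DecidableRel G.Adj]
  (k : ℕ)

theorem subset_kStep (S : Finset V) : S ⊆ kStep G k S :=
  Finset.subset_union_left

theorem kStep_mono : Monotone (kStep G k) := by
  intro S T hST v hv
  simp only [kStep, Finset.mem_union, Finset.mem_filter, Finset.mem_univ, true_and] at hv ⊢
  rcases hv with hv | ⟨u, hu, huv, hcard⟩
  · exact Or.inl (hST hv)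
  · exact Or.inr ⟨u, hST hu, huv,
      (Finset.card_le_card (Finset.sdiff_subset_sdiff le_rfl hST)).trans hcard⟩

theorem subset_iterate_kStep (S : Finset V) (n : ℕ) : S ⊆ (kStep G k)^[n] S :=
  Function.id_le_iterate_of_id_le (subset_kStep G k) n S

theorem exists_kStep_iterate_eq (S : Finset V) :
    ∃ n, kStep G k ((kStep G k)^[n] S) = (kStep G k)^[n] S := by
  have hmono : Monotone fun n => (kStep G k)^[n] S :=
    monotone_nat_of_le_succ fun n => by
      rw [Function.iterate_succ_apply']
      exact subset_kStep G k _
  obtain ⟨n, hn⟩ := WellFoundedGT.monotone_chain_condition ⟨_, hmono⟩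
  exact ⟨n, by simpa [Function.iterate_succ_apply'] using (hn (n + 1) n.le_succ).symm⟩

theorem iterate_kStep_union_subset (S T : Finset V) (n : ℕ) :
    (kStep G k)^[n] S ∪ T ⊆ (kStep G k)^[n] (S ∪ T) :=
  Finset.union_subset (((kStep_mono G k).iterate n) Finset.subset_union_left)
    (Finset.subset_union_right.trans (subset_iterate_kStep G k _ n))

theorem union_subset_kStep_union {S T : Finset V} (h : T ⊆ kStep G k S) (X : Finset V) :
    T ∪ X ⊆ kStep G k (S ∪ X) :=
  Finset.union_subset (h.trans (kStep_mono G k Finset.subset_union_left))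
    (Finset.subset_union_right.trans (subset_kStep G k _))

variable {G k}

theorem IsKForcingSet.of_subset_iterate {S T : Finset V} {n : ℕ}
    (hT : T ⊆ (kStep G k)^[n] S) (h : IsKForcingSet G k T) : IsKForcingSet G k S := by
  obtain ⟨m, hm⟩ := h
  refine ⟨m + n, Finset.univ_subset_iff.1 ?_⟩
  rw [Function.iterate_add_apply, ← hm]
  exact (kStep_mono G k).iterate m hT

theorem lt_card_neighborFinset_sdiff_of_kStep_eq {C : Finset V} (hC : kStep G k C = C)
    {u w : V} (hu : u ∈ C) (hw : w ∉ C) (huw : G.Adj u w) :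
    k < (G.neighborFinset u \ C).card := by
  by_contra! hcard
  apply hw
  rw [← hC]
  simp only [kStep, Finset.mem_union, Finset.mem_filter, Finset.mem_univ, true_and]
  exact Or.inr ⟨u, hu, huw, hcard⟩

theorem exists_subset_neighborFinset_subset_kStep {C : Finset V} {u : V} (hu : u ∈ C)
    (hk : k ≤ (G.neighborFinset u \ C).card) :
    ∃ W ⊆ G.neighborFinset u \ C, W.card = (G.neighborFinset u \ C).card - k ∧
      C ∪ G.neighborFinset u ⊆ kStep G k (C ∪ W) := by
  obtain ⟨T, hTM, hTcard⟩ := Finset.exists_subset_card_eq hk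
  refine ⟨_ \ T, Finset.sdiff_subset, by rw [Finset.card_sdiff_of_subset hTM, hTcard], ?_⟩
  intro x hx
  by_cases hxW : x ∈ C ∪ ((G.neighborFinset u \ C) \ T)
  · exact subset_kStep G k _ hxW
  have hunforced : G.neighborFinset u \ (C ∪ ((G.neighborFinset u \ C) \ T)) ⊆ T := by
    intro y hy
    simp only [Finset.mem_sdiff, Finset.mem_union] at hy
    tauto
  simp only [kStep, Finset.mem_union, Finset.mem_filter, Finset.mem_univ, true_and]
  refine Or.inr ⟨u, Or.inl hu, ?_, (Finset.card_le_card hunforced).trans hTcard.le⟩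
  simp only [Finset.mem_union, Finset.mem_sdiff, not_or, not_and, not_not] at hx hxW
  rcases hx with hx | hx
  · exact absurd hx hxW.1
  · exact (G.mem_neighborFinset u x).1 hx

end Forcing

def InducesNoIsolatedVertex {V : Type*} (G : SimpleGraph V) (C : Finset V) : Prop :=
  ∀ x ∈ C, ∃ y ∈ C, G.Adj x y

namespace InducesNoIsolatedVertex

variable {V : Type*} [Fintype V] [DecidableEq V] {G : SimpleGraph V} [DecidableRel G.Adj]
  {C : Finset V}

theorem kStep {k : ℕ} (hC : InducesNoIsolatedVertex G C) :
    InducesNoIsolatedVertex G (kStep G k C) := by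
  intro x hx
  simp only [_root_.kStep, Finset.mem_union, Finset.mem_filter, Finset.mem_univ, true_and] at hx
  rcases hx with hx | ⟨u, hu, hux, -⟩
  · obtain ⟨y, hy, hxy⟩ := hC x hx
    exact ⟨y, subset_kStep G k C hy, hxy⟩
  · exact ⟨u, subset_kStep G k C hu, hux.symm⟩

theorem iterate_kStep {k : ℕ} (hC : InducesNoIsolatedVertex G C) (n : ℕ) :
    InducesNoIsolatedVertex G ((_root_.kStep G k)^[n] C) := by
  induction n with
  | zero => exact hC
  | succ n ih => rw [Function.iterate_succ_apply']; exact ih.kStep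

theorem union_neighborFinset (hC : InducesNoIsolatedVertex G C) {u : V} (hu : u ∈ C) :
    InducesNoIsolatedVertex G (C ∪ G.neighborFinset u) := by
  intro x hx
  rcases Finset.mem_union.1 hx with hx | hx
  · obtain ⟨y, hy, hxy⟩ := hC x hx
    exact ⟨y, Finset.mem_union_left _ hy, hxy⟩
  · exact ⟨u, Finset.mem_union_left _ hu, ((G.mem_neighborFinset u x).1 hx).symm⟩

end InducesNoIsolatedVertex

theorem inducesNoIsolatedVertex_insert_neighborFinset {V : Type*} [Fintype V]
    [DecidableEq V] {G : SimpleGraph V} [DecidableRel G.Adj] {v : V}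
    (hv : (G.neighborFinset v).Nonempty) :
    InducesNoIsolatedVertex G (insert v (G.neighborFinset v)) := by
  intro x hx
  rcases Finset.mem_insert.1 hx with rfl | hx
  · obtain ⟨y, hy⟩ := hv
    exact ⟨y, Finset.mem_insert_of_mem hy, (G.mem_neighborFinset x y).1 hy⟩
  · exact ⟨v, Finset.mem_insert_self _ _, ((G.mem_neighborFinset v x).1 hx).symm⟩

theorem card_neighborFinset_sdiff_lt_degree {V : Type*} [Fintype V] [DecidableEq V]
    {G : SimpleGraph V} [DecidableRel G.Adj] {C : Finset V} {u y : V} (hy : y ∈ C)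
    (huy : G.Adj u y) : (G.neighborFinset u \ C).card < G.degree u := by
  rw [← G.card_neighborFinset_eq_degree]
  refine Finset.card_lt_card ⟨Finset.sdiff_subset, fun h => ?_⟩
  exact (Finset.mem_sdiff.1 (h ((G.mem_neighborFinset u y).2 huy))).2 hy

theorem mul_sub_le_mul_of_lt {Δ k m : ℕ} (hkm : k ≤ m) (hmΔ : m < Δ) :
    (Δ - 1) * (m - k) ≤ (Δ - k - 1) * m := by
  obtain ⟨a, rfl⟩ := Nat.exists_eq_add_of_le hkm
  obtain ⟨c, rfl⟩ := Nat.exists_eq_add_of_lt hmΔ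
  have e1 : k + a + c + 1 - 1 = k + a + c := by omega
  have e2 : k + a + c + 1 - k - 1 = a + c := by omega
  rw [e1, e2, Nat.add_sub_cancel_left]
  nlinarith

theorem SimpleGraph.Preconnected.exists_adj_mem_notMem {V : Type*} {G : SimpleGraph V}
    (hG : G.Preconnected) {s : Set V} {u w : V} (hu : u ∈ s) (hw : w ∉ s) :
    ∃ x ∈ s, ∃ y ∉ s, G.Adj x y := by
  obtain ⟨p⟩ := hG u w
  obtain ⟨d, -, hd₁, hd₂⟩ := p.exists_boundary_dart s hu hw
  exact ⟨d.fst, hd₁, d.snd, hd₂, d.adj⟩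

section Bound

variable {V : Type*} [Fintype V] [DecidableEq V] {G : SimpleGraph V} [DecidableRel G.Adj]
  {k : ℕ}

theorem exists_isKForcingSet_union (hG : G.Connected) {C : Finset V} (hne : C.Nonempty)
    (hC : InducesNoIsolatedVertex G C) :
    ∃ D : Finset V, IsKForcingSet G k (C ∪ D) ∧
      (G.maxDegree - 1) * D.card ≤ (G.maxDegree - k - 1) * (Fintype.card V - C.card) := by
  induction hr : Fintype.card V - C.card using Nat.strong_induction_on generalizing C with
  | _ r ih =>
  obtain ⟨n, hfix⟩ := exists_kStep_iterate_eq G k C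
  set C' := (kStep G k)^[n] C
  have hCC' : C ⊆ C' := subset_iterate_kStep G k C n
  by_cases htop : C' = Finset.univ
  · exact ⟨∅, ⟨n, by rwa [Finset.union_empty]⟩, by simp⟩
  obtain ⟨v, hv⟩ := hne
  obtain ⟨x, hx⟩ : ∃ x, x ∉ C' := by simpa [Finset.eq_univ_iff_forall] using htop
  obtain ⟨u, hu, w, hw, huw⟩ :=
    hG.preconnected.exists_adj_mem_notMem (s := ↑C') (hCC' hv) hx
  obtain ⟨y, hy, huy⟩ := hC.iterate_kStep n u hu
  have hkM := lt_card_neighborFinset_sdiff_of_kStep_eq hfix hu hw huw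
  have hMΔ : (G.neighborFinset u \ C').card < G.maxDegree :=
    (card_neighborFinset_sdiff_lt_degree hy huy).trans_le (G.degree_le_maxDegree u)
  obtain ⟨W, -, hWcard, hforce⟩ := exists_subset_neighborFinset_subset_kStep hu hkM.le
  have hcard : (C' ∪ G.neighborFinset u).card = C'.card + (G.neighborFinset u \ C').card := by
    rw [Finset.union_comm, ← Finset.card_sdiff_add_card, add_comm]
  have hcardC : C.card ≤ C'.card := Finset.card_le_card hCC'
  have hcardV : (C' ∪ G.neighborFinset u).card ≤ Fintype.card V := Finset.card_le_univ _
  obtain ⟨D, hD, hDcard⟩ := ih _ (by omega) ⟨u, Finset.mem_union_left _ hu⟩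
    ((hC.iterate_kStep n).union_neighborFinset hu) rfl
  refine ⟨W ∪ D, hD.of_subset_iterate (n := n + 1) ?_, ?_⟩
  · rw [Function.iterate_succ_apply']
    refine (union_subset_kStep_union G k hforce D).trans (kStep_mono G k ?_)
    rw [Finset.union_assoc]
    exact iterate_kStep_union_subset G k C _ n
  · have hW := mul_sub_le_mul_of_lt hkM.le hMΔ
    rw [← hWcard] at hW
    calc (G.maxDegree - 1) * (W ∪ D).card
        ≤ (G.maxDegree - 1) * W.card + (G.maxDegree - 1) * D.card := by
          rw [← mul_add]; exact Nat.mul_le_mul_left _ (Finset.card_union_le W D)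
      _ ≤ (G.maxDegree - k - 1) * ((G.neighborFinset u \ C').card
            + (Fintype.card V - (C' ∪ G.neighborFinset u).card)) := by
          rw [mul_add]; exact Nat.add_le_add hW hDcard
      _ ≤ (G.maxDegree - k - 1) * r := Nat.mul_le_mul_left _ (by omega)

theorem exists_isKForcingSet_mul_card_le (hG : G.Connected) (hk : k < G.maxDegree) :
    ∃ S : Finset V, IsKForcingSet G k S ∧
      (G.maxDegree - 1) * S.card ≤ (G.maxDegree - k - 1) * Fintype.card V + 2 * k := by
  have : Nonempty V := hG.nonempty
  obtain ⟨v, hv⟩ := G.exists_maximal_degree_vertex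
  have hdeg : (G.neighborFinset v).card = G.maxDegree := by
    rw [G.card_neighborFinset_eq_degree, hv]
  have hNv : G.neighborFinset v \ {v} = G.neighborFinset v := by
    rw [Finset.sdiff_singleton_eq_erase,
      Finset.erase_eq_of_notMem (G.notMem_neighborFinset_self v)]
  obtain ⟨W, -, hWcard, hforce⟩ := exists_subset_neighborFinset_subset_kStep (k := k)
    (Finset.mem_singleton_self v) (by rw [hNv]; omega)
  rw [hNv, hdeg] at hWcard
  obtain ⟨D, hD, hDcard⟩ := exists_isKForcingSet_union (k := k) hG
    (C := {v} ∪ G.neighborFinset v) ⟨v, by simp⟩ (by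
      rw [Finset.singleton_union]
      exact inducesNoIsolatedVertex_insert_neighborFinset (Finset.card_pos.1 (by omega)))
  refine ⟨{v} ∪ W ∪ D, hD.of_subset_iterate (n := 1) (union_subset_kStep_union G k hforce D), ?_⟩
  have hS : ({v} ∪ W ∪ D).card ≤ 1 + W.card + D.card :=
    (Finset.card_union_le _ _).trans (by gcongr; exact Finset.card_union_le _ _)
  have hN : ({v} ∪ G.neighborFinset v).card = G.maxDegree + 1 := by
    rw [Finset.singleton_union, Finset.card_insert_of_notMem (G.notMem_neighborFinset_self v),
      hdeg]
  obtain ⟨a, ha⟩ := Nat.exists_eq_add_of_lt hk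
  obtain ⟨c, hc⟩ := Nat.exists_eq_add_of_le (hN ▸ Finset.card_le_univ ({v} ∪ G.neighborFinset v))
  rw [hN, hc, ha, show k + a + 1 - 1 = k + a by omega, show k + a + 1 - k - 1 = a by omega,
    Nat.add_sub_cancel_left] at hDcard
  rw [hWcard, ha, show k + a + 1 - k = a + 1 by omega] at hS
  rw [hc, ha, show k + a + 1 - 1 = k + a by omega, show k + a + 1 - k - 1 = a by omega]
  nlinarith

end Bound

theorem kForcingNumber_le_simplified_general {V : Type*} [Fintype V] [DecidableEq V]
    (G : SimpleGraph V) [DecidableRel G.Adj] (k : ℕ)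
    (hconn : G.Connected) (hΔ : k + 2 ≤ G.maxDegree) :
    (kForcingNumber G k : ℝ) ≤
      (((G.maxDegree : ℝ) - k - 1) * (Fintype.card V) + 2 * k) / ((G.maxDegree : ℝ) - 1) := by
  obtain ⟨S, hS, hcard⟩ := exists_isKForcingSet_mul_card_le hconn (by omega : k < G.maxDegree)
  have hF : kForcingNumber G k ≤ S.card := Nat.sInf_le ⟨S, rfl, hS⟩
  have hΔ' : (k : ℝ) + 2 ≤ G.maxDegree := by exact_mod_cast hΔ
  rify [show 1 ≤ G.maxDegree by omega, show k ≤ G.maxDegree by omega,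
    show 1 ≤ G.maxDegree - k by omega] at hcard
  rw [le_div_iff₀ (by linarith)]
  calc (kForcingNumber G k : ℝ) * (G.maxDegree - 1) ≤ S.card * (G.maxDegree - 1) :=
        mul_le_mul_of_nonneg_right (by exact_mod_cast hF) (by linarith)
    _ ≤ (G.maxDegree - k - 1) * Fintype.card V + 2 * k := by linarith

/-- If `G` is connected with `Δ(G) ≥ k + 2`, then `F_k(G) ≤ ((Δ-k-1)n + 2k) / (Δ-1)`. -/
theorem kForcingNumber_le_simplified {V : Type*} [Fintype V] [DecidableEq V]
    (G : SimpleGraph V) [DecidableRel G.Adj] (k : ℕ) (hk : 1 ≤ k)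
    (hconn : G.Connected) (hΔ : k + 2 ≤ G.maxDegree) :
    (kForcingNumber G k : ℝ) ≤
      (((G.maxDegree : ℝ) - k - 1) * (Fintype.card V) + 2 * k) / ((G.maxDegree : ℝ) - 1) :=
  kForcingNumber_le_simplified_general G k hconn hΔ
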